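/- Let φ : ℝ×ℝ² → ℂ be a Schwartz function with φ(t,ξ) = 0 whenever t < 0. Then the backprojection (x₁₂,x₃) ↦ (R*φ)(x₁₂,x₃) = (1/(4π)) ∫_{ℝ²} φ(√(‖x₁₂−ξ‖² + x₃²), ξ) · (√(‖x₁₂−ξ‖² + x₃²))^{−1} dξ is a Schwartz function on ℝ²×ℝ. -/

import Mathlib

open MeasureTheory Real Complex

/-- Backprojection operator:
`(R*φ)(x₁₂,x₃) = (1/(4π)) ∫_{ℝ²} φ(√(‖x₁₂−ξ‖² + x₃²), ξ)·(√(‖x₁₂−ξ‖² + x₃²))⁻¹ dξ`. -/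
noncomputable def Rstar (g : ℝ × EuclideanSpace ℝ (Fin 2) → ℂ)
    (x : EuclideanSpace ℝ (Fin 2) × ℝ) : ℂ :=
  ((1 / (4 * π) : ℝ) : ℂ) * ∫ ξ : EuclideanSpace ℝ (Fin 2),
    g (Real.sqrt (‖x.1 - ξ‖ ^ 2 + x.2 ^ 2), ξ) /
      ((Real.sqrt (‖x.1 - ξ‖ ^ 2 + x.2 ^ 2) : ℝ) : ℂ)

/- Put H(s, ξ) = φ(√s, ξ) / √s, so that (R*φ)(x) = (4π)⁻¹ ∫ H(‖x₁₂ - ξ‖² + x₃², ξ) dξ.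
A Schwartz function vanishing for t < 0 vanishes to infinite order at t = 0 (mean value theorem),
so t⁻ʲ f and f(√s, ξ) are again Schwartz: their derivatives have the same shape, built from
Schwartz functions vanishing for t < 0, and the order of vanishing absorbs the singular factors
near t = 0. Composing with (x, ξ) ↦ (‖x₁₂ - ξ‖² + x₃², ξ), which has temperate growth and is
polynomially proper, and integrating out ξ (differentiation under the integral) preserve the
Schwartz class. -/

open Filter Topology SchwartzMap Asymptotics
open scoped LineDeriv

universe u

section SchwartzCriterion

variable {D : Type u} [NormedAddCommGroup D] [NormedSpace ℝ D]

theorem contDiff_and_decay_of_forall_hasFDerivAt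
    (P : ∀ (V : Type u) [NormedAddCommGroup V] [NormedSpace ℝ V], (D → V) → Prop)
    (hderiv : ∀ (V : Type u) [NormedAddCommGroup V] [NormedSpace ℝ V] (g : D → V), P V g →
      ∃ g' : D → D →L[ℝ] V, P (D →L[ℝ] V) g' ∧ ∀ x, HasFDerivAt g (g' x) x)
    (hdecay : ∀ (V : Type u) [NormedAddCommGroup V] [NormedSpace ℝ V] (g : D → V), P V g →
      ∀ k : ℕ, ∃ C, ∀ x, ‖x‖ ^ k * ‖g x‖ ≤ C) (n : ℕ) :
    ∀ (V : Type u) [NormedAddCommGroup V] [NormedSpace ℝ V] (g : D → V), P V g →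
      ContDiff ℝ n g ∧ ∀ k : ℕ, ∃ C, ∀ x, ‖x‖ ^ k * ‖iteratedFDeriv ℝ n g x‖ ≤ C := by
  induction n with
  | zero =>
    intro V _ _ g hg
    obtain ⟨g', -, hg'⟩ := hderiv V g hg
    refine ⟨contDiff_zero.2 (continuous_iff_continuousAt.2 fun x => (hg' x).continuousAt),
      fun k => ?_⟩
    simpa only [norm_iteratedFDeriv_zero] using hdecay V g hg k
  | succ n ih =>
    intro V _ _ g hg
    obtain ⟨g', hPg', hg'⟩ := hderiv V g hg
    have hfderiv : fderiv ℝ g = g' := funext fun x => (hg' x).fderiv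
    obtain ⟨hsmooth, hbound⟩ := ih _ g' hPg'
    refine ⟨?_, fun k => ?_⟩
    · rw [Nat.cast_succ, contDiff_succ_iff_fderiv, hfderiv]
      exact ⟨fun x => (hg' x).differentiableAt, by simp, hsmooth⟩
    · simpa only [← norm_iteratedFDeriv_fderiv, hfderiv] using hbound k

theorem exists_schwartzMap_of_forall_hasFDerivAt
    (P : ∀ (V : Type u) [NormedAddCommGroup V] [NormedSpace ℝ V], (D → V) → Prop)
    (hderiv : ∀ (V : Type u) [NormedAddCommGroup V] [NormedSpace ℝ V] (g : D → V), P V g →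
      ∃ g' : D → D →L[ℝ] V, P (D →L[ℝ] V) g' ∧ ∀ x, HasFDerivAt g (g' x) x)
    (hdecay : ∀ (V : Type u) [NormedAddCommGroup V] [NormedSpace ℝ V] (g : D → V), P V g →
      ∀ k : ℕ, ∃ C, ∀ x, ‖x‖ ^ k * ‖g x‖ ≤ C)
    {V : Type u} [NormedAddCommGroup V] [NormedSpace ℝ V] {g : D → V} (hg : P V g) :
    ∃ ψ : 𝓢(D, V), ⇑ψ = g :=
  ⟨{ toFun := g
     smooth' := contDiff_infty.2 fun n =>
       (contDiff_and_decay_of_forall_hasFDerivAt P hderiv hdecay n V g hg).1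
     decay' := fun k n =>
       (contDiff_and_decay_of_forall_hasFDerivAt P hderiv hdecay n V g hg).2 k }, rfl⟩

end SchwartzCriterion

section HalfSpace

def VanishesOnNegFst {E V : Type*} [Zero V] (f : ℝ × E → V) : Prop :=
  ∀ p : ℝ × E, p.1 < 0 → f p = 0

theorem VanishesOnNegFst.of_fst_nonpos {E V : Type*} [TopologicalSpace E] [TopologicalSpace V]
    [T2Space V] [Zero V] {f : ℝ × E → V} (hf : VanishesOnNegFst f) (hc : Continuous f)
    {p : ℝ × E} (hp : p.1 ≤ 0) : f p = 0 := by
  have hEq : Set.EqOn f 0 (Set.Iio 0 ×ˢ Set.univ) := fun q hq => hf q hq.1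
  refine hEq.closure hc continuous_const ?_
  rw [closure_prod_eq, closure_Iio, closure_univ]
  exact ⟨hp, trivial⟩

variable {E : Type u} [NormedAddCommGroup E] [NormedSpace ℝ E]
  {V : Type u} [NormedAddCommGroup V] [NormedSpace ℝ V]

namespace VanishesOnNegFst

variable {f : ℝ × E → V}

theorem fderiv (hf : VanishesOnNegFst f) : VanishesOnNegFst (_root_.fderiv ℝ f) := by
  intro p hp
  have hzero : f =ᶠ[𝓝 p] fun _ => 0 :=
    eventually_of_mem ((isOpen_lt continuous_fst continuous_const).mem_nhds hp) hf
  simp [hzero.fderiv_eq]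

theorem fderiv_of_fst_nonpos (hf : VanishesOnNegFst f) (hc : ContDiff ℝ 1 f) {p : ℝ × E}
    (hp : p.1 ≤ 0) : _root_.fderiv ℝ f p = 0 :=
  hf.fderiv.of_fst_nonpos (hc.continuous_fderiv one_ne_zero) hp

end VanishesOnNegFst

theorem SchwartzMap.exists_norm_snd_pow_mul_le_fst_pow (f : 𝓢(ℝ × E, V))
    (hf : VanishesOnNegFst f) (j k : ℕ) :
    ∃ C, 0 ≤ C ∧ ∀ p : ℝ × E, 0 ≤ p.1 → ‖p.2‖ ^ k * ‖f p‖ ≤ C * p.1 ^ j := by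
  induction j generalizing f with
  | zero =>
    refine ⟨SchwartzMap.seminorm ℝ k 0 f, by positivity, fun p _ => ?_⟩
    calc ‖p.2‖ ^ k * ‖f p‖ ≤ ‖p‖ ^ k * ‖f p‖ := by gcongr; exact norm_snd_le p
      _ ≤ _ := by simpa using f.norm_pow_mul_le_seminorm ℝ k p
  | succ j ih =>
    have hdf : VanishesOnNegFst ⇑(∂_{((1 : ℝ), (0 : E))} f : 𝓢(ℝ × E, V)) := fun p hp => by
      simp [lineDerivOp_apply_eq_fderiv, hf.fderiv p hp]
    obtain ⟨C, hC, hbound⟩ := ih _ hdf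
    refine ⟨C, hC, fun ⟨t, ξ⟩ ht => ?_⟩
    have hderiv : ∀ s ∈ Set.Icc 0 t, HasDerivWithinAt (fun s : ℝ => ‖ξ‖ ^ k • f (s, ξ))
        (‖ξ‖ ^ k • ∂_{((1 : ℝ), (0 : E))} f (s, ξ)) (Set.Icc 0 t) s := fun s _ =>
      ((f.hasFDerivAt (s, ξ)).comp_hasDerivAt s
        ((hasDerivAt_id s).prodMk (hasDerivAt_const s ξ))).hasDerivWithinAt.const_smul _
    have hle : ∀ s ∈ Set.Ico 0 t, ‖‖ξ‖ ^ k • ∂_{((1 : ℝ), (0 : E))} f (s, ξ)‖ ≤ C * t ^ j :=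
      fun s hs => by
        rw [norm_smul, norm_pow, norm_norm]
        calc _ ≤ C * s ^ j := hbound (s, ξ) hs.1
          _ ≤ C * t ^ j := by gcongr; exacts [hs.1, hs.2.le]
    have hmvt := norm_image_sub_le_of_norm_deriv_le_segment' hderiv hle t ⟨ht, le_rfl⟩
    rw [hf.of_fst_nonpos f.continuous (p := (0, ξ)) le_rfl, smul_zero, sub_zero, norm_smul,
      norm_pow, norm_norm, sub_zero] at hmvt
    simpa [pow_succ, mul_assoc] using hmvt

theorem hasFDerivAt_zero_of_norm_le_fst_sq {W : Type*} [NormedAddCommGroup W]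
    [NormedSpace ℝ W] {g : ℝ × E → W} {C : ℝ} (hC : 0 ≤ C)
    (hneg : ∀ q : ℝ × E, q.1 ≤ 0 → g q = 0) (hpos : ∀ q : ℝ × E, 0 < q.1 → ‖g q‖ ≤ C * q.1 ^ 2)
    {p : ℝ × E} (hp : p.1 ≤ 0) :
    HasFDerivAt g (0 : ℝ × E →L[ℝ] W) p := by
  refine IsBigO.hasFDerivAt (n := 2) (IsBigO.of_bound C (Eventually.of_forall fun q => ?_))
    one_lt_two
  rw [norm_pow, norm_norm]
  rcases le_or_gt q.1 0 with hq | hq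
  · rw [hneg q hq, norm_zero]; positivity
  calc ‖g q‖ ≤ C * q.1 ^ 2 := hpos q hq
    _ ≤ C * ‖q - p‖ ^ 2 := by
      have : q.1 ≤ ‖q - p‖ := calc
        q.1 ≤ ‖(q - p).1‖ := by
          rw [Prod.fst_sub, Real.norm_eq_abs]; linarith [le_abs_self (q.1 - p.1)]
        _ ≤ ‖q - p‖ := norm_fst_le _
      gcongr

theorem hasDerivAt_inv_pow (j : ℕ) {t : ℝ} (ht : t ≠ 0) :
    HasDerivAt (fun s : ℝ => s⁻¹ ^ j) (-(j : ℝ) * t⁻¹ ^ (j + 1)) t := by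
  have h := hasDerivAt_zpow (-(j : ℤ)) t (Or.inl ht)
  rw [show -(j : ℤ) - 1 = -((j + 1 : ℕ) : ℤ) by push_cast; ring] at h
  simpa only [zpow_neg, zpow_natCast, ← inv_pow, Int.cast_neg, Int.cast_natCast] using h

namespace SchwartzMap

variable (f : 𝓢(ℝ × E, V)) (hf : VanishesOnNegFst f)
include hf

theorem hasFDerivAt_inv_fst_pow_smul (j : ℕ) (p : ℝ × E) :
    HasFDerivAt (fun q : ℝ × E => q.1⁻¹ ^ j • f q)
      (p.1⁻¹ ^ (j + 1) • (p.1 • fderiv ℝ f p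
        - (j : ℝ) • (ContinuousLinearMap.fst ℝ ℝ E).smulRight (f p))) p := by
  rcases le_or_gt p.1 0 with hp | hp
  · rw [hf.of_fst_nonpos f.continuous hp, hf.fderiv_of_fst_nonpos (f.smooth 1) hp]
    simp only [ContinuousLinearMap.smulRight_zero, smul_zero, sub_zero]
    obtain ⟨C, hC, hbound⟩ := f.exists_norm_snd_pow_mul_le_fst_pow hf (j + 2) 0
    refine hasFDerivAt_zero_of_norm_le_fst_sq hC
      (fun q hq => by simp [hf.of_fst_nonpos f.continuous hq]) (fun q hq => ?_) hp
    have := hbound q hq.le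
    rw [pow_zero, one_mul] at this
    rw [norm_smul, norm_pow, norm_inv, Real.norm_of_nonneg hq.le]
    calc q.1⁻¹ ^ j * ‖f q‖ ≤ q.1⁻¹ ^ j * (C * q.1 ^ (j + 2)) := by gcongr
      _ = C * q.1 ^ 2 := by rw [inv_pow]; field_simp; ring
  · have hinv := (hasDerivAt_inv_pow j hp.ne').comp_hasFDerivAt p
      (hasFDerivAt_fst (𝕜 := ℝ) (p := p))
    refine (hinv.smul (f.hasFDerivAt p)).congr_fderiv ?_
    refine ContinuousLinearMap.ext fun v => ?_
    simp only [Function.comp_apply, add_apply, smul_apply, sub_apply,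
      ContinuousLinearMap.smulRight_apply, ContinuousLinearMap.coe_fst']
    match_scalars
    · rw [pow_succ, mul_one, mul_one, mul_assoc, inv_mul_cancel₀ hp.ne', mul_one]
    · rw [smul_eq_mul]; ring

theorem exists_norm_pow_mul_inv_fst_pow_smul_le (j k : ℕ) :
    ∃ C, ∀ p : ℝ × E, ‖p‖ ^ k * ‖p.1⁻¹ ^ j • f p‖ ≤ C := by
  obtain ⟨C₀, hC₀, h₀⟩ := f.exists_norm_snd_pow_mul_le_fst_pow hf j 0
  obtain ⟨Cₖ, hCₖ, hₖ⟩ := f.exists_norm_snd_pow_mul_le_fst_pow hf j k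
  set S := SchwartzMap.seminorm ℝ k 0 f
  refine ⟨C₀ + Cₖ + S, fun p => ?_⟩
  rcases le_or_gt p.1 0 with hp | hp
  · simp only [hf.of_fst_nonpos f.continuous hp, smul_zero, norm_zero, mul_zero]
    positivity
  rw [norm_smul, norm_pow, norm_inv, Real.norm_of_nonneg hp.le]
  rcases le_or_gt p.1 1 with hp1 | hp1
  · have hnorm : ‖p‖ ^ k ≤ 1 + ‖p.2‖ ^ k := by
      rcases le_total ‖p.1‖ ‖p.2‖ with h | h
      · rw [Prod.norm_def, max_eq_right h]; linarith
      · rw [Prod.norm_def, max_eq_left h, Real.norm_of_nonneg hp.le]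
        linarith [pow_le_one₀ hp.le hp1 (n := k), pow_nonneg (norm_nonneg p.2) k]
    have h₀p := h₀ p hp.le
    rw [pow_zero, one_mul] at h₀p
    calc ‖p‖ ^ k * (p.1⁻¹ ^ j * ‖f p‖) ≤ (1 + ‖p.2‖ ^ k) * (p.1⁻¹ ^ j * ‖f p‖) := by gcongr
      _ = p.1⁻¹ ^ j * (‖f p‖ + ‖p.2‖ ^ k * ‖f p‖) := by ring
      _ ≤ p.1⁻¹ ^ j * (C₀ * p.1 ^ j + Cₖ * p.1 ^ j) := by
          gcongr ?_ * (?_ + ?_)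
          exact hₖ p hp.le
      _ = C₀ + Cₖ := by rw [inv_pow]; field_simp
      _ ≤ C₀ + Cₖ + S := by linarith [apply_nonneg (SchwartzMap.seminorm ℝ k 0) f]
  · calc ‖p‖ ^ k * (p.1⁻¹ ^ j * ‖f p‖) ≤ ‖p‖ ^ k * (1 * ‖f p‖) := by
          gcongr; exact pow_le_one₀ (by positivity) (inv_le_one_of_one_le₀ hp1.le)
      _ ≤ S := by simpa using f.norm_pow_mul_le_seminorm ℝ k p
      _ ≤ C₀ + Cₖ + S := by linarith

theorem exists_eq_inv_fst_pow_smul (j : ℕ) :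
    ∃ ψ : 𝓢(ℝ × E, V), ⇑ψ = fun p => p.1⁻¹ ^ j • f p := by
  refine exists_schwartzMap_of_forall_hasFDerivAt
    (fun V _ _ g => ∃ f : 𝓢(ℝ × E, V), VanishesOnNegFst f ∧ ∃ j : ℕ,
      g = fun p => p.1⁻¹ ^ j • f p) ?_ ?_ ⟨f, hf, j, rfl⟩
  · rintro W _ _ _ ⟨f, hf, j, rfl⟩
    have hfst : Function.HasTemperateGrowth fun p : ℝ × E => p.1 :=
      (ContinuousLinearMap.fst ℝ ℝ E).hasTemperateGrowth
    let h : 𝓢(ℝ × E, ℝ × E →L[ℝ] W) :=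
      smulLeftCLM _ (fun p : ℝ × E => p.1) (fderivCLM ℝ _ _ f) - (j : ℝ) •
        postcompCLM (ContinuousLinearMap.smulRightL ℝ (ℝ × E) W (ContinuousLinearMap.fst ℝ ℝ E)) f
    have h_apply : ∀ p, h p = p.1 • fderiv ℝ f p
        - (j : ℝ) • (ContinuousLinearMap.fst ℝ ℝ E).smulRight (f p) := fun p => by
      simp [h, smulLeftCLM_apply_apply hfst]
    refine ⟨_, ⟨h, fun p hp => ?_, j + 1, rfl⟩, fun p => ?_⟩
    · simp [h_apply, hf p hp, hf.fderiv p hp]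
    · simpa only [h_apply] using f.hasFDerivAt_inv_fst_pow_smul hf j p
  · rintro W _ _ _ ⟨f, hf, j, rfl⟩ k
    exact f.exists_norm_pow_mul_inv_fst_pow_smul_le hf j k

theorem hasFDerivAt_comp_sqrt_fst (p : ℝ × E) :
    HasFDerivAt (fun q : ℝ × E => f (√q.1, q.2))
      ((2 * √p.1)⁻¹ • (fderiv ℝ f (√p.1, p.2) ∘L
          (ContinuousLinearMap.inl ℝ ℝ E ∘L ContinuousLinearMap.fst ℝ ℝ E))
        + fderiv ℝ f (√p.1, p.2) ∘L
          (ContinuousLinearMap.inr ℝ ℝ E ∘L ContinuousLinearMap.snd ℝ ℝ E)) p := by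
  rcases le_or_gt p.1 0 with hp | hp
  · have hsqrt : √p.1 = 0 := Real.sqrt_eq_zero'.2 hp
    rw [hsqrt, hf.fderiv_of_fst_nonpos (f.smooth 1) (p := (0, p.2)) le_rfl]
    simp only [ContinuousLinearMap.zero_comp, smul_zero, add_zero]
    obtain ⟨C, hC, hbound⟩ := f.exists_norm_snd_pow_mul_le_fst_pow hf 4 0
    refine hasFDerivAt_zero_of_norm_le_fst_sq hC (fun q hq => ?_) (fun q hq => ?_) hp
    · rw [Real.sqrt_eq_zero'.2 hq]
      exact hf.of_fst_nonpos f.continuous (p := (0, q.2)) le_rfl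
    · have h4 : √q.1 ^ 4 = q.1 ^ 2 := by
        rw [show 4 = 2 * 2 by rfl, pow_mul, Real.sq_sqrt hq.le]
      simpa [h4] using hbound (√q.1, q.2) (Real.sqrt_nonneg _)
  · have hsqrt := ((Real.hasDerivAt_sqrt hp.ne').comp_hasFDerivAt p
      (hasFDerivAt_fst (𝕜 := ℝ) (p := p))).prodMk (hasFDerivAt_snd (p := p))
    refine ((f.hasFDerivAt _).comp p hsqrt).congr_fderiv ?_
    refine ContinuousLinearMap.ext fun v => ?_
    simp only [ContinuousLinearMap.comp_apply, add_apply, smul_apply]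
    rw [← map_smul, ← map_add]
    congr 1
    ext <;> simp [div_eq_inv_mul]

theorem exists_norm_pow_mul_comp_sqrt_fst_le (k : ℕ) :
    ∃ C, ∀ p : ℝ × E, ‖p‖ ^ k * ‖f (√p.1, p.2)‖ ≤ C := by
  refine ⟨SchwartzMap.seminorm ℝ (2 * k) 0 f + SchwartzMap.seminorm ℝ k 0 f, fun p => ?_⟩
  set y : ℝ × E := (√p.1, p.2)
  rcases le_or_gt p.1 0 with hp | hp
  · have hy : f y = 0 := by
      rw [show y = (0, p.2) by simp [y, Real.sqrt_eq_zero'.2 hp]]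
      exact hf.of_fst_nonpos f.continuous le_rfl
    rw [hy, norm_zero, mul_zero]
    positivity
  have hnorm : ‖p‖ ≤ max (‖y‖ ^ 2) ‖y‖ := by
    refine max_le_max ?_ (norm_snd_le y)
    calc ‖p.1‖ = ‖y.1‖ ^ 2 := by simp [y, Real.norm_of_nonneg hp.le, Real.sq_sqrt hp.le]
      _ ≤ ‖y‖ ^ 2 := by gcongr; exact norm_fst_le y
  have hpow : ‖p‖ ^ k ≤ ‖y‖ ^ (2 * k) + ‖y‖ ^ k := by
    rw [pow_mul]
    rcases le_total (‖y‖ ^ 2) ‖y‖ with h | h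
    · rw [max_eq_right h] at hnorm
      linarith [pow_le_pow_left₀ (norm_nonneg p) hnorm k, pow_nonneg (sq_nonneg ‖y‖) k]
    · rw [max_eq_left h] at hnorm
      linarith [pow_le_pow_left₀ (norm_nonneg p) hnorm k, pow_nonneg (norm_nonneg y) k]
  calc ‖p‖ ^ k * ‖f y‖ ≤ ‖y‖ ^ (2 * k) * ‖f y‖ + ‖y‖ ^ k * ‖f y‖ := by
        rw [← add_mul]; gcongr
    _ ≤ _ := add_le_add (f.norm_pow_mul_le_seminorm ℝ _ y) (f.norm_pow_mul_le_seminorm ℝ _ y)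

-- For `s ≤ 0` this is `f (0, ξ) = 0`, since `√s = 0`.
theorem exists_eq_comp_sqrt_fst : ∃ ψ : 𝓢(ℝ × E, V), ⇑ψ = fun p => f (√p.1, p.2) := by
  refine exists_schwartzMap_of_forall_hasFDerivAt
    (fun V _ _ g => ∃ f : 𝓢(ℝ × E, V), VanishesOnNegFst f ∧ g = fun p => f (√p.1, p.2))
    ?_ ?_ ⟨f, hf, rfl⟩
  · rintro W _ _ _ ⟨f, hf, rfl⟩
    let L (P : ℝ × E →L[ℝ] ℝ × E) : 𝓢(ℝ × E, ℝ × E →L[ℝ] W) :=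
      postcompCLM ((ContinuousLinearMap.compL ℝ (ℝ × E) (ℝ × E) W).flip P) (fderivCLM ℝ _ _ f)
    have hL (P : ℝ × E →L[ℝ] ℝ × E) : VanishesOnNegFst (L P) := fun p hp => by
      simp [L, hf.fderiv p hp]
    -- The chain-rule factor `(2√s)⁻¹` is absorbed by dividing by the first coordinate.
    obtain ⟨ψ, hψ⟩ := (L (.inl ℝ ℝ E ∘L .fst ℝ ℝ E)).exists_eq_inv_fst_pow_smul (hL _) 1
    refine ⟨_, ⟨(2⁻¹ : ℝ) • ψ + L (.inr ℝ ℝ E ∘L .snd ℝ ℝ E), fun p hp => ?_, rfl⟩,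
      fun p => ?_⟩
    · simp only [add_apply, smul_apply, hψ, hL _ p hp, smul_zero, add_zero]
    · refine (f.hasFDerivAt_comp_sqrt_fst hf p).congr_fderiv ?_
      simp [hψ, L, smul_smul, mul_comm]
  · rintro W _ _ _ ⟨f, hf, rfl⟩ k
    exact f.exists_norm_pow_mul_comp_sqrt_fst_le hf k

end SchwartzMap

end HalfSpace

section Integration

variable {D : Type u} [NormedAddCommGroup D] [NormedSpace ℝ D]
  {E : Type*} [NormedAddCommGroup E] [NormedSpace ℝ E]
  {W : Type u} [NormedAddCommGroup W] [NormedSpace ℝ W]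

namespace SchwartzMap

theorem exists_norm_fst_pow_mul_le_one_add_norm_snd_rpow (S : 𝓢(D × E, W)) (k l : ℕ) :
    ∃ C, ∀ x ξ, ‖x‖ ^ k * ‖S (x, ξ)‖ ≤ C * (1 + ‖ξ‖) ^ (-(l : ℝ)) := by
  refine ⟨2 ^ l * (SchwartzMap.seminorm ℝ k 0 S + SchwartzMap.seminorm ℝ (k + l) 0 S),
    fun x ξ => ?_⟩
  have h₁ : ‖x‖ ^ k * ‖S (x, ξ)‖ ≤ SchwartzMap.seminorm ℝ k 0 S := calc
    ‖x‖ ^ k * ‖S (x, ξ)‖ ≤ ‖(x, ξ)‖ ^ k * ‖S (x, ξ)‖ := by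
      gcongr; exact norm_fst_le ((x, ξ) : D × E)
    _ ≤ _ := S.norm_pow_mul_le_seminorm ℝ k (x, ξ)
  have h₂ : ‖ξ‖ ^ (0 + l) * (‖x‖ ^ k * ‖S (x, ξ)‖) ≤ SchwartzMap.seminorm ℝ (k + l) 0 S := calc
    ‖ξ‖ ^ (0 + l) * (‖x‖ ^ k * ‖S (x, ξ)‖) ≤ ‖(x, ξ)‖ ^ (k + l) * ‖S (x, ξ)‖ := by
      rw [zero_add, ← mul_assoc, pow_add, mul_comm (‖(x, ξ)‖ ^ k)]
      gcongr
      exacts [norm_snd_le ((x, ξ) : D × E), norm_fst_le ((x, ξ) : D × E)]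
    _ ≤ _ := S.norm_pow_mul_le_seminorm ℝ (k + l) (x, ξ)
  simpa using pow_mul_le_of_le_of_pow_mul_le (norm_nonneg ξ) (by positivity) h₁ h₂

variable [MeasurableSpace E] (μ : Measure E) [μ.HasTemperateGrowth]

theorem exists_integrable_bound (S : 𝓢(D × E, W)) (k : ℕ) :
    ∃ b : E → ℝ, Integrable b μ ∧ ∀ x ξ, ‖x‖ ^ k * ‖S (x, ξ)‖ ≤ b ξ := by
  obtain ⟨C, hC⟩ := S.exists_norm_fst_pow_mul_le_one_add_norm_snd_rpow k μ.integrablePower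
  exact ⟨_, (μ.integrable_pow_neg_integrablePower).const_mul C, hC⟩

theorem exists_norm_pow_mul_integral_comp_prodMk_left_le (S : 𝓢(D × E, W)) (k : ℕ) :
    ∃ C, ∀ x, ‖x‖ ^ k * ‖∫ ξ, S (x, ξ) ∂μ‖ ≤ C := by
  obtain ⟨b, hb, hbound⟩ := S.exists_integrable_bound μ k
  refine ⟨∫ ξ, b ξ ∂μ, fun x => ?_⟩
  calc ‖x‖ ^ k * ‖∫ ξ, S (x, ξ) ∂μ‖ = ‖∫ ξ, ‖x‖ ^ k • S (x, ξ) ∂μ‖ := by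
        rw [integral_smul, norm_smul, norm_pow, norm_norm]
    _ ≤ _ := norm_integral_le_of_norm_le hb
        (Eventually.of_forall fun ξ => by simpa [norm_smul] using hbound x ξ)

variable [BorelSpace E] [SecondCountableTopology E]

theorem integrable_comp_prodMk_left (S : 𝓢(D × E, W)) (x : D) :
    Integrable (fun ξ => S (x, ξ)) μ := by
  obtain ⟨b, hb, hbound⟩ := S.exists_integrable_bound μ 0
  exact hb.mono' (S.continuous.comp (Continuous.prodMk_right x)).aestronglyMeasurable
    (Eventually.of_forall fun ξ => by simpa using hbound x ξ)

theorem hasFDerivAt_integral_comp_prodMk_left (S : 𝓢(D × E, W)) (x₀ : D) :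
    HasFDerivAt (fun x => ∫ ξ, S (x, ξ) ∂μ)
      (∫ ξ, fderiv ℝ S (x₀, ξ) ∘L ContinuousLinearMap.inl ℝ D E ∂μ) x₀ := by
  let S' : 𝓢(D × E, D →L[ℝ] W) := postcompCLM
    ((ContinuousLinearMap.compL ℝ D (D × E) W).flip (.inl ℝ D E)) (fderivCLM ℝ _ _ S)
  obtain ⟨b, hb, hbound⟩ := S'.exists_integrable_bound μ 0
  refine hasFDerivAt_integral_of_dominated_of_fderiv_le (F' := fun x ξ => S' (x, ξ))
    (bound := b) (s := Set.univ) univ_mem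
    (Eventually.of_forall fun x => (S.integrable_comp_prodMk_left μ x).aestronglyMeasurable)
    (S.integrable_comp_prodMk_left μ x₀)
    (S'.integrable_comp_prodMk_left μ x₀).aestronglyMeasurable
    (Eventually.of_forall fun ξ x _ => by simpa using hbound x ξ) hb
    (Eventually.of_forall fun ξ x _ => ?_)
  exact (S.hasFDerivAt (x, ξ)).comp x (hasFDerivAt_prodMk_left x ξ)

theorem exists_eq_integral_comp_prodMk_left (S : 𝓢(D × E, W)) :
    ∃ ψ : 𝓢(D, W), ⇑ψ = fun x => ∫ ξ, S (x, ξ) ∂μ := by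
  refine exists_schwartzMap_of_forall_hasFDerivAt
    (fun W _ _ g => ∃ S : 𝓢(D × E, W), g = fun x => ∫ ξ, S (x, ξ) ∂μ) ?_ ?_ ⟨S, rfl⟩
  · rintro W _ _ _ ⟨S, rfl⟩
    refine ⟨_, ⟨postcompCLM ((ContinuousLinearMap.compL ℝ D (D × E) W).flip
      (.inl ℝ D E)) (fderivCLM ℝ _ _ S), rfl⟩, fun x => ?_⟩
    simpa using S.hasFDerivAt_integral_comp_prodMk_left μ x
  · rintro W _ _ _ ⟨S, rfl⟩ k
    exact S.exists_norm_pow_mul_integral_comp_prodMk_left_le μ k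

end SchwartzMap

end Integration

section Cone

variable {H : Type*} [NormedAddCommGroup H]

theorem hasTemperateGrowth_norm_sub_sq_add_sq [InnerProductSpace ℝ H] :
    Function.HasTemperateGrowth fun y : (H × ℝ) × H => (‖y.1.1 - y.2‖ ^ 2 + y.1.2 ^ 2, y.2) := by
  have hsub : Function.HasTemperateGrowth fun y : (H × ℝ) × H => y.1.1 - y.2 :=
    (ContinuousLinearMap.fst ℝ H ℝ ∘L ContinuousLinearMap.fst ℝ (H × ℝ) H
      - ContinuousLinearMap.snd ℝ (H × ℝ) H).hasTemperateGrowth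
  have hlast : Function.HasTemperateGrowth fun y : (H × ℝ) × H => y.1.2 :=
    (ContinuousLinearMap.snd ℝ H ℝ ∘L ContinuousLinearMap.fst ℝ (H × ℝ) H).hasTemperateGrowth
  have hq : Function.HasTemperateGrowth fun y : (H × ℝ) × H => ‖y.1.1 - y.2‖ ^ 2 + y.1.2 ^ 2 :=
    ((Function.hasTemperateGrowth_norm_sq H).comp hsub).add (hlast.pow 2)
  convert ((ContinuousLinearMap.inl ℝ ℝ H).hasTemperateGrowth.comp hq).add
    (ContinuousLinearMap.inr ℝ ℝ H ∘L ContinuousLinearMap.snd ℝ (H × ℝ) H).hasTemperateGrowth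
    using 1
  ext y <;> simp

theorem norm_le_two_mul_one_add_norm_sub_sq_add_sq (y : (H × ℝ) × H) :
    ‖y‖ ≤ 2 * (1 + ‖((‖y.1.1 - y.2‖ ^ 2 + y.1.2 ^ 2, y.2) : ℝ × H)‖) := by
  set q := ‖y.1.1 - y.2‖ ^ 2 + y.1.2 ^ 2
  set G := ‖((q, y.2) : ℝ × H)‖
  have hG : 0 ≤ G := norm_nonneg _
  have hq : q ≤ G := (le_abs_self q).trans (norm_fst_le ((q, y.2) : ℝ × H))
  have hξ : ‖y.2‖ ≤ G := norm_snd_le ((q, y.2) : ℝ × H)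
  have hdiff : ‖y.1.1 - y.2‖ ≤ 1 + q := by
    nlinarith [sq_nonneg (‖y.1.1 - y.2‖ - 1), sq_nonneg y.1.2]
  have ht : |y.1.2| ≤ 1 + q := by
    nlinarith [sq_nonneg (|y.1.2| - 1), sq_abs y.1.2, sq_nonneg ‖y.1.1 - y.2‖]
  have hx : ‖y.1.1‖ ≤ ‖y.1.1 - y.2‖ + ‖y.2‖ := norm_le_norm_sub_add _ _
  refine norm_prod_le_iff.2 ⟨norm_prod_le_iff.2 ⟨by linarith, ?_⟩, by linarith⟩
  rw [Real.norm_eq_abs]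
  linarith

end Cone

theorem stmt8 (φ : SchwartzMap (ℝ × EuclideanSpace ℝ (Fin 2)) ℂ)
    (hφ : ∀ (t : ℝ) (ξ : EuclideanSpace ℝ (Fin 2)), t < 0 → φ (t, ξ) = 0) :
    ∃ ψ : SchwartzMap (EuclideanSpace ℝ (Fin 2) × ℝ) ℂ,
      ∀ x : EuclideanSpace ℝ (Fin 2) × ℝ, ψ x = Rstar (⇑φ) x := by
  have hφ' : VanishesOnNegFst φ := fun p hp => hφ p.1 p.2 hp
  obtain ⟨Q, hQ⟩ := φ.exists_eq_inv_fst_pow_smul hφ' 1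
  obtain ⟨H, hH⟩ := Q.exists_eq_comp_sqrt_fst fun p hp => by simp [hQ, hφ' p hp]
  let K := compCLM ℝ hasTemperateGrowth_norm_sub_sq_add_sq
    ⟨1, 2, fun y => by simpa using norm_le_two_mul_one_add_norm_sub_sq_add_sq y⟩ H
  obtain ⟨I, hI⟩ := K.exists_eq_integral_comp_prodMk_left volume
  refine ⟨((1 / (4 * π) : ℝ) : ℂ) • I, fun x => ?_⟩
  simp [Rstar, hI, K, hH, hQ, div_eq_inv_mul]
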